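/- Let n < m be positive integers with m > 2n and let α₁,…,αₙ, β_{n+1},…,β_m be positive integers with α₁+⋯+αₙ = β_{n+1}+⋯+β_m. Set b₀ = 0 ∈ ℤ^m, b_i = e_i for i = 1,…,m, b_{m+1} = (α₁,…,αₙ,−β_{n+1},…,−β_m), a_i = (b_i,1) ∈ ℤ^{m+1} for i = 0,…,m+1, and let C(A) be the cone of nonnegative real combinations of a₀,…,a_{m+1}. Suppose k₀,…,k_{m+1} ∈ ℤ are such that Σ_{i=0}^{m+1} k_i a_i lies in the topological interior of C(A), and set Q = {q ∈ {0,…,m+1} : k_q > 0}. Then Q = {0,1,…,n} or card(Q) > n+1. -/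
import Mathlib
open Finset
lemma master {N M : ℕ} (C : Set (Fin N → ℝ)) (a : Fin M → Fin N → ℝ)
    (hC : C = {x | ∃ w : Fin M → ℝ, (∀ q, 0 ≤ w q) ∧ x = ∑ q, w q • a q})
    (k : Fin M → ℤ) (hk : ∑ q, (k q : ℝ) • a q ∈ interior C)
    (c : Fin N → ℝ) (hc : c ≠ 0)
    (hpos : ∀ q, 0 ≤ ∑ i, c i * a q i)
    (hneg : ∀ q, 0 < k q → ∑ i, c i * a q i ≤ 0) : False := by
  set f : (Fin N → ℝ) → ℝ := fun z => ∑ i, c i * z i with hf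
  have hlin : ∀ (w : Fin M → ℝ), f (∑ q, w q • a q) = ∑ q, w q * ∑ i, c i * a q i := by
    intro w
    simp only [hf, Finset.sum_apply, Pi.smul_apply, smul_eq_mul, Finset.mul_sum]
    rw [Finset.sum_comm]
    exact Finset.sum_congr rfl fun q _ => Finset.sum_congr rfl fun i _ => by ring
  have hCpos : ∀ x ∈ C, 0 ≤ f x := by
    intro x hx
    rw [hC] at hx
    obtain ⟨w, hw, rfl⟩ := hx
    rw [hlin]
    exact Finset.sum_nonneg fun q _ => mul_nonneg (hw q) (hpos q)
  set x : Fin N → ℝ := ∑ q, (k q : ℝ) • a q with hx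
  have hcont : Continuous fun t : ℝ => x - t • c := by continuity
  have hmem : (fun t : ℝ => x - t • c) ⁻¹' interior C ∈ nhds (0 : ℝ) := by
    apply (isOpen_interior.preimage hcont).mem_nhds
    simpa using hk
  obtain ⟨ε, hε, hball⟩ := Metric.mem_nhds_iff.1 hmem
  have hδ : x - (ε/2) • c ∈ C := by
    apply interior_subset
    apply hball
    rw [Metric.mem_ball, dist_zero_right, Real.norm_eq_abs, abs_of_nonneg (le_of_lt (half_pos hε))]
    linarith
  have h1 : 0 ≤ f (x - (ε/2) • c) := hCpos _ hδ
  have h2 : f (x - (ε/2) • c) = f x - (ε/2) * f c := by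
    simp only [hf, Pi.sub_apply, Pi.smul_apply, smul_eq_mul]
    rw [Finset.mul_sum, ← Finset.sum_sub_distrib]
    exact Finset.sum_congr rfl fun i _ => by ring
  have hfx : f x ≤ 0 := by
    rw [hx, hlin]
    apply Finset.sum_nonpos
    intro q _
    rcases le_or_gt (k q) 0 with h | h
    · exact mul_nonpos_of_nonpos_of_nonneg (by exact_mod_cast h) (hpos q)
    · exact mul_nonpos_of_nonneg_of_nonpos (by positivity) (hneg q h)
  have hfc : 0 < f c := by
    have : f c = ∑ i, (c i)^2 := Finset.sum_congr rfl fun i _ => by ring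
    rw [this]
    apply Finset.sum_pos'
    · intro i _; positivity
    · obtain ⟨i, hi⟩ := Function.ne_iff.1 hc
      exact ⟨i, Finset.mem_univ i, by simp at hi; positivity⟩
  nlinarith

lemma dot_reduce {m : ℕ} (b : Fin (m + 2) → Fin m → ℝ) (a : Fin (m + 2) → Fin (m + 1) → ℝ)
    (ha : ∀ q, a q = Fin.snoc (b q) 1) (d : Fin m → ℝ) (c₀ : ℝ) (q : Fin (m + 2)) :
    ∑ i : Fin (m + 1), (Fin.snoc d c₀ : Fin (m+1) → ℝ) i * a q i = (∑ i : Fin m, d i * b q i) + c₀ := by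
  rw [ha, Fin.sum_univ_castSucc]
  simp [Fin.snoc_castSucc, Fin.snoc_last]

lemma dot_mid {m : ℕ} (b : Fin (m + 2) → Fin m → ℝ)
    (hbe : ∀ q : Fin (m + 2), 1 ≤ (q : ℕ) → (q : ℕ) ≤ m →
      ∀ i : Fin m, b q i = if (i : ℕ) + 1 = (q : ℕ) then 1 else 0)
    (d : Fin m → ℝ) (q : Fin (m + 2)) (h1 : 1 ≤ (q : ℕ)) (h2 : (q : ℕ) ≤ m) :
    ∑ i : Fin m, d i * b q i = d ⟨(q : ℕ) - 1, by omega⟩ := by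
  have : ∀ i : Fin m, d i * b q i = if i = ⟨(q : ℕ) - 1, by omega⟩ then d i else 0 := by
    intro i
    rw [hbe q h1 h2 i]
    by_cases h : (i : ℕ) + 1 = (q : ℕ)
    · rw [if_pos h, if_pos (by apply Fin.ext; simp; omega), mul_one]
    · rw [if_neg h, if_neg (by intro hc; apply h; rw [hc]; simp; omega), mul_zero]
  rw [Finset.sum_congr rfl fun i _ => this i, Finset.sum_ite_eq' Finset.univ]
  simp

lemma dot_last_split (n m : ℕ) (hnm : n ≤ m) (α : Fin n → ℕ) (β : Fin (m - n) → ℕ)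
    (bM : Fin m → ℝ)
    (hbm : ∀ i : Fin m, bM i =
      if h : (i : ℕ) < n then (α ⟨i, h⟩ : ℝ)
      else -(β ⟨(i : ℕ) - n, by have := i.isLt; omega⟩ : ℝ))
    (u v : ℝ) :
    ∑ i : Fin m, (if (i : ℕ) < n then u else v) * bM i
      = u * (∑ i, (α i : ℝ)) - v * (∑ j, (β j : ℝ)) := by
  set A : ℕ → ℝ := fun i => if h : i < n then (α ⟨i, h⟩ : ℝ) else 0 with hA
  set B : ℕ → ℝ := fun j => if h : j < m - n then (β ⟨j, h⟩ : ℝ) else 0 with hB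
  set g : ℕ → ℝ := fun i =>
    if h : i < m then (if i < n then u else v) *
      (if h' : i < n then (α ⟨i, h'⟩ : ℝ) else -(β ⟨i - n, by omega⟩ : ℝ)) else 0 with hg
  have step1 : ∑ i : Fin m, (if (i : ℕ) < n then u else v) * bM i = ∑ i ∈ range m, g i := by
    rw [← Fin.sum_univ_eq_sum_range]
    refine Finset.sum_congr rfl fun i _ => ?_
    rw [hbm i, hg]
    simp only [i.isLt, dif_pos]
  have step2 : ∑ i ∈ range m, g i = ∑ i ∈ range n, g i + ∑ i ∈ range (m - n), g (n + i) := by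
    rw [Finset.range_eq_Ico, ← Finset.sum_Ico_consecutive _ (Nat.zero_le n) hnm,
      ← Finset.range_eq_Ico, Finset.sum_Ico_eq_sum_range]
  have step3 : ∑ i ∈ range n, g i = u * ∑ i, (α i : ℝ) := by
    have e1 : ∑ i ∈ range n, g i = ∑ i ∈ range n, u * A i := by
      refine Finset.sum_congr rfl fun i hi => ?_
      rw [Finset.mem_range] at hi
      rw [hg, hA]
      simp only [dif_pos (show i < m by omega), if_pos hi, dif_pos hi]
    rw [e1, ← Fin.sum_univ_eq_sum_range (fun i => u * A i) n, ← Finset.mul_sum]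
    congr 1
    refine Finset.sum_congr rfl fun i _ => ?_
    simp [hA, i.isLt]
  have step4 : ∑ i ∈ range (m - n), g (n + i) = -(v * ∑ j, (β j : ℝ)) := by
    have e1 : ∑ i ∈ range (m - n), g (n + i) = ∑ i ∈ range (m - n), -(v * B i) := by
      refine Finset.sum_congr rfl fun i hi => ?_
      rw [Finset.mem_range] at hi
      rw [hg, hB]
      have h1 : n + i < m := by omega
      have h2 : ¬ (n + i < n) := by omega
      simp only [dif_pos h1, if_neg h2, dif_neg h2, dif_pos hi]
      have h4 : (⟨n + i - n, by omega⟩ : Fin (m - n)) = ⟨i, hi⟩ := Fin.mk_eq_mk.2 (by omega)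
      rw [h4]
      ring
    rw [e1, ← Fin.sum_univ_eq_sum_range (fun i => -(v * B i)) (m - n)]
    have e2 : ∑ j : Fin (m - n), -(v * B (j : ℕ)) = ∑ j : Fin (m - n), -(v * (β j : ℝ)) := by
      refine Finset.sum_congr rfl fun j _ => ?_
      simp [hB, j.isLt]
    rw [e2, Finset.sum_neg_distrib, ← Finset.mul_sum]
  rw [step1, step2, step3, step4]
  ring
lemma indsum {m : ℕ} (w : ℝ) (p : Fin m) (g : Fin m → ℝ) :
    ∑ i : Fin m, (if i = p then w else 0) * g i = w * g p := by
  have : ∀ i : Fin m, (if i = p then w else 0) * g i = if i = p then w * g i else 0 := by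
    intro i; split_ifs <;> simp
  rw [Finset.sum_congr rfl fun i _ => this i, Finset.sum_ite_eq' Finset.univ]
  simp

lemma key (n m : ℕ) (hn : 0 < n) (hnm : 2 * n < m)
    (α : Fin n → ℕ) (β : Fin (m - n) → ℕ)
    (b : Fin (m + 2) → Fin m → ℝ)
    (hb0 : b 0 = 0)
    (hbe : ∀ q : Fin (m + 2), 1 ≤ (q : ℕ) → (q : ℕ) ≤ m →
      ∀ i : Fin m, b q i = if (i : ℕ) + 1 = (q : ℕ) then 1 else 0)
    (hbm : ∀ i : Fin m, b ⟨m + 1, by omega⟩ i =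
      if h : (i : ℕ) < n then (α ⟨i, h⟩ : ℝ)
      else -(β ⟨(i : ℕ) - n, by have := i.isLt; omega⟩ : ℝ))
    (a : Fin (m + 2) → Fin (m + 1) → ℝ)
    (ha : ∀ q, a q = Fin.snoc (b q) 1)
    (C : Set (Fin (m + 1) → ℝ))
    (hC : C = {x | ∃ w : Fin (m + 2) → ℝ, (∀ q, 0 ≤ w q) ∧ x = ∑ q, w q • a q})
    (k : Fin (m + 2) → ℤ)
    (hk : ∑ q, (k q : ℝ) • a q ∈ interior C)
    (u v w₁ w₂ c₀ : ℝ) (p r : Fin m) (hpr : p ≠ r)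
    (hne : c₀ ≠ 0 ∨ (u = 0 ∧ v = 0 ∧ w₁ ≠ 0))
    (V : Fin (m + 2) → ℝ)
    (hV : ∀ q : Fin (m+2), V q = (if (q : ℕ) = 0 then 0 else if (q : ℕ) ≤ m then
        ((if (q : ℕ) - 1 < n then u else v) + (if (q : ℕ) - 1 = (p : ℕ) then w₁ else 0)
          + (if (q : ℕ) - 1 = (r : ℕ) then w₂ else 0))
      else (u * (∑ i, (α i : ℝ)) - v * (∑ j, (β j : ℝ))
          + w₁ * b ⟨m + 1, by omega⟩ p + w₂ * b ⟨m + 1, by omega⟩ r)) + c₀)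
    (hVpos : ∀ q, 0 ≤ V q)
    (hVneg : ∀ q, 0 < k q → V q ≤ 0) : False := by
  set D : Fin m → ℝ := fun i => (if (i : ℕ) < n then u else v) + (if i = p then w₁ else 0)
      + (if i = r then w₂ else 0) with hD
  have hcne : (Fin.snoc D c₀ : Fin (m + 1) → ℝ) ≠ 0 := by
    intro hzero
    rcases hne with h | ⟨hu, hv, hw⟩
    · apply h
      have := congrFun hzero (Fin.last m)
      simpa [Fin.snoc_last] using this
    · apply hw
      have := congrFun hzero (Fin.castSucc p)
      rw [Fin.snoc_castSucc] at this
      simp only [hD, hu, hv, if_pos rfl, if_neg hpr, if_true, ite_self, Pi.zero_apply,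
        zero_add, add_zero] at this
      exact this
  have heval : ∀ q : Fin (m + 2), ∑ i : Fin (m + 1), (Fin.snoc D c₀ : Fin (m+1) → ℝ) i * a q i = V q := by
    intro q
    rw [dot_reduce b a ha D c₀ q, hV q]
    rcases Nat.lt_or_ge (q : ℕ) 1 with hq | hq
    · have hq0 : (q : ℕ) = 0 := by omega
      have hqe : q = 0 := Fin.ext (by simpa using hq0)
      rw [hqe, hb0]
      simp
    · rcases Nat.lt_or_ge (m : ℕ) (q : ℕ) with hq2 | hq2
      · have hqm : (q : ℕ) = m + 1 := by have := q.isLt; omega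
        have hqe : q = ⟨m + 1, by omega⟩ := Fin.ext (by simpa using hqm)
        rw [if_neg (by omega), if_neg (by omega), hqe]
        congr 1
        simp only [hD, add_mul, Finset.sum_add_distrib, indsum]
        rw [dot_last_split n m (by omega) α β _ hbm u v]
      · rw [if_neg (by omega), if_pos hq2]
        rw [dot_mid b hbe D q hq hq2]
        congr 1
        simp only [hD]
        congr 2
        · congr 1
          simp [Fin.ext_iff]
        · simp [Fin.ext_iff]
  exact master C a hC k hk (Fin.snoc D c₀) hcne
    (fun q => by rw [heval q]; exact hVpos q)
    (fun q h => by rw [heval q]; exact hVneg q h)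
lemma card_filter_interval (M aa c : ℕ) (hc : c < M) (hac : aa ≤ c) :
    (Finset.univ.filter fun q : Fin M => aa ≤ (q : ℕ) ∧ (q : ℕ) ≤ c).card = c + 1 - aa := by
  have he : (Finset.univ.filter fun q : Fin M => aa ≤ (q : ℕ) ∧ (q : ℕ) ≤ c)
      = Finset.Icc ⟨aa, by omega⟩ ⟨c, hc⟩ := by
    ext q
    simp [Finset.mem_Icc, Fin.le_def]
  rw [he]
  rw [Fin.card_Icc]
set_option maxHeartbeats 1000000 in
/-- if Σ kᵢaᵢ is interior to the cone C(A), then the set Q of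
indices with kᵢ > 0 is {0,…,n} or has cardinality > n+1. -/
theorem stmt_7 (n m : ℕ) (hn : 0 < n) (hnm : 2 * n < m)
    (α : Fin n → ℕ) (β : Fin (m - n) → ℕ)
    (hα : ∀ i, 0 < α i) (hβ : ∀ j, 0 < β j)
    (hsum : ∑ i, α i = ∑ j, β j)
    (b : Fin (m + 2) → Fin m → ℝ)
    (hb0 : b 0 = 0)
    (hbe : ∀ q : Fin (m + 2), ∀ hq1 : 1 ≤ (q : ℕ), (q : ℕ) ≤ m →
      ∀ i : Fin m, b q i = if (i : ℕ) + 1 = (q : ℕ) then 1 else 0)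
    (hbm : ∀ i : Fin m, b ⟨m + 1, by omega⟩ i =
      if h : (i : ℕ) < n then (α ⟨i, h⟩ : ℝ)
      else -(β ⟨(i : ℕ) - n, by have := i.isLt; omega⟩ : ℝ))
    (a : Fin (m + 2) → Fin (m + 1) → ℝ)
    (ha : ∀ q, a q = Fin.snoc (b q) 1)
    (C : Set (Fin (m + 1) → ℝ))
    (hC : C = {x | ∃ w : Fin (m + 2) → ℝ, (∀ q, 0 ≤ w q) ∧ x = ∑ q, w q • a q})
    (k : Fin (m + 2) → ℤ)
    (hk : ∑ q, (k q : ℝ) • a q ∈ interior C) :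
    (Finset.univ.filter fun q : Fin (m + 2) => 0 < k q) =
        (Finset.univ.filter fun q : Fin (m + 2) => (q : ℕ) ≤ n) ∨
      n + 1 < (Finset.univ.filter fun q : Fin (m + 2) => 0 < k q).card := by
  classical
  by_cases hbig : n + 1 < (Finset.univ.filter fun q : Fin (m + 2) => 0 < k q).card
  · right; exact hbig
  left
  set Q := Finset.univ.filter fun q : Fin (m + 2) => 0 < k q with hQ
  have hQle : Q.card ≤ n + 1 := by omega
  have hα1 : ∀ i, (1 : ℝ) ≤ (α i : ℝ) := fun i => by exact_mod_cast hα i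
  have hβ1 : ∀ j, (1 : ℝ) ≤ (β j : ℝ) := fun j => by exact_mod_cast hβ j
  set S : ℝ := ∑ i, (α i : ℝ) with hSdef
  have hSβ : ∑ j, (β j : ℝ) = S := by
    have h := congrArg (fun t : ℕ => (t : ℝ)) hsum
    push_cast at h
    rw [hSdef]
    exact h.symm
  have hS1 : (1 : ℝ) ≤ S := by
    rw [hSdef]
    exact le_trans (hα1 ⟨0, hn⟩)
      (Finset.single_le_sum (f := fun i => (α i : ℝ)) (fun i _ => by positivity) (Finset.mem_univ _))
  have hβS : ∀ j' : Fin (m - n), (β j' : ℝ) + 1 ≤ S := by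
    intro j'
    rw [← hSβ]
    have h2 : 2 ≤ m - n := by omega
    set o : Fin (m - n) := if (j' : ℕ) = 0 then ⟨1, by omega⟩ else ⟨0, by omega⟩ with ho
    have hvo : (o : ℕ) = if (j' : ℕ) = 0 then 1 else 0 := by
      rw [ho]; split_ifs <;> rfl
    have hvne : (j' : ℕ) ≠ (o : ℕ) := by rw [hvo]; split_ifs with h <;> omega
    have hne : j' ≠ o := fun h => hvne (congrArg Fin.val h)
    have hpair := Finset.sum_le_sum_of_subset_of_nonneg (f := fun j => (β j : ℝ))
      (Finset.subset_univ ({j', o} : Finset (Fin (m - n)))) (fun i _ _ => by positivity)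
    rw [Finset.sum_pair hne] at hpair
    linarith [hβ1 o]
  have Hle : ∀ s : Finset (Fin (m + 2)), s ⊆ Q → n + 1 ≤ s.card → ∀ q, q ∉ s → k q ≤ 0 := by
    intro s hsQ hcard q hq
    by_contra hk'
    push_neg at hk'
    have h1 : insert q s ⊆ Q := Finset.insert_subset
      (by rw [hQ]; exact Finset.mem_filter.2 ⟨Finset.mem_univ _, hk'⟩) hsQ
    have h2 := Finset.card_le_card h1
    rw [Finset.card_insert_of_notMem hq] at h2
    omega
  have card_s1n : (Finset.univ.filter fun q : Fin (m + 2) => 1 ≤ (q : ℕ) ∧ (q : ℕ) ≤ n).card = n := by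
    have := card_filter_interval (m + 2) 1 n (by omega) (by omega)
    omega
  have card_sMid : (Finset.univ.filter fun q : Fin (m + 2) => n + 1 ≤ (q : ℕ) ∧ (q : ℕ) ≤ m).card
      = m - n := by
    have := card_filter_interval (m + 2) (n + 1) m (by omega) (by omega)
    omega
  -- STEP A
  have hpos1 : ∀ q₀ : Fin (m + 2), 1 ≤ (q₀ : ℕ) → (q₀ : ℕ) ≤ n → 0 < k q₀ := by
    intro q₀ hq1 hq2
    by_contra hkq
    push_neg at hkq
    have hi₀lt : (q₀ : ℕ) - 1 < m := by omega
    set i₀ : Fin m := ⟨(q₀ : ℕ) - 1, hi₀lt⟩ with hi₀def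
    have hi₀v : (i₀ : ℕ) = (q₀ : ℕ) - 1 := rfl
    have hi₀n : (i₀ : ℕ) < n := by omega
    have hbMi₀ : b ⟨m + 1, by omega⟩ i₀ = (α ⟨(i₀ : ℕ), hi₀n⟩ : ℝ) := by
      rw [hbm i₀, dif_pos hi₀n]
    have cj : ∀ j : Fin m, n ≤ (j : ℕ) → 0 < k ⟨(j : ℕ) + 1, by omega⟩ := by
      intro j hjn
      by_contra hkj
      push_neg at hkj
      have hjmn : (j : ℕ) - n < m - n := by have := j.isLt; omega
      have hbMj : b ⟨m + 1, by omega⟩ j = -(β ⟨(j : ℕ) - n, hjmn⟩ : ℝ) := by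
        rw [hbm j, dif_neg (by omega)]
      refine key n m hn hnm α β b hb0 hbe hbm a ha C hC k hk
        0 0 (β ⟨(j : ℕ) - n, hjmn⟩ : ℝ) (α ⟨(i₀ : ℕ), hi₀n⟩ : ℝ) 0 i₀ j
        (fun h => by have := congrArg Fin.val h; omega)
        (Or.inr ⟨rfl, rfl, by have := hβ1 ⟨(j : ℕ) - n, hjmn⟩; positivity⟩)
        _ (fun q => rfl) ?_ ?_
      · intro q
        split_ifs <;> try positivity
        · rw [hbMi₀, hbMj]; linarith
      · intro q hkq'
        split_ifs with h1 h2 h3 h4 h5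
        · norm_num
        · exfalso; omega
        · exfalso
          have hq : q = q₀ := Fin.ext (by omega)
          rw [hq] at hkq'; omega
        · exfalso; omega
        · norm_num
        · exfalso; omega
        · exfalso; omega
        · exfalso
          have hq : q = ⟨(j : ℕ) + 1, by omega⟩ := Fin.ext (show (q : ℕ) = (j : ℕ) + 1 by omega)
          rw [hq] at hkq'; omega
        · norm_num
        · rw [hbMi₀, hbMj]; linarith
    -- now all of n+1..m are in Q
    have hsub : (Finset.univ.filter fun q : Fin (m + 2) => n + 1 ≤ (q : ℕ) ∧ (q : ℕ) ≤ m) ⊆ Q := by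
      intro q hq
      rw [Finset.mem_filter] at hq
      obtain ⟨-, hqa, hqb⟩ := hq
      have hlt : (q : ℕ) - 1 < m := by omega
      have hthis := cj ⟨(q : ℕ) - 1, hlt⟩ (by show n ≤ (q : ℕ) - 1; omega)
      have hqe : (⟨((q : ℕ) - 1) + 1, by omega⟩ : Fin (m + 2)) = q :=
        Fin.ext (show (q : ℕ) - 1 + 1 = (q : ℕ) by omega)
      rw [hqe] at hthis
      rw [hQ]; exact Finset.mem_filter.2 ⟨Finset.mem_univ _, hthis⟩
    have hkL : k ⟨m + 1, by omega⟩ ≤ 0 := by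
      refine Hle _ hsub (by omega) _ ?_
      simp only [Finset.mem_filter, Finset.mem_univ, true_and]
      omega
    refine key n m hn hnm α β b hb0 hbe hbm a ha C hC k hk
      0 0 1 0 0 i₀ ⟨n, by omega⟩
      (fun h => by have h2 := congrArg Fin.val h; simp only [Fin.val_mk] at h2; omega)
      (Or.inr ⟨rfl, rfl, one_ne_zero⟩)
      _ (fun q => rfl) ?_ ?_
    · intro q
      dsimp only
      split_ifs <;> try positivity
      · rw [hbMi₀]; linarith [hα1 ⟨(i₀ : ℕ), hi₀n⟩]
    · intro q hkq'
      dsimp only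
      split_ifs with h1 h2 h3 h4 h5
      · norm_num
      · exfalso
        have hq : q = q₀ := Fin.ext (by omega)
        rw [hq] at hkq'; omega
      · exfalso
        have hq : q = q₀ := Fin.ext (by omega)
        rw [hq] at hkq'; omega
      · norm_num
      · norm_num
      · exfalso; omega
      · exfalso; omega
      · norm_num
      · norm_num
      · exfalso
        have hq : q = ⟨m + 1, by omega⟩ := Fin.ext (show (q : ℕ) = m + 1 by have := q.isLt; omega)
        rw [hq] at hkq'
        exact absurd hkq' (not_lt.2 hkL)
  -- STEP B
  have h1nQ : (Finset.univ.filter fun q : Fin (m + 2) => 1 ≤ (q : ℕ) ∧ (q : ℕ) ≤ n) ⊆ Q := by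
    intro q hq
    rw [Finset.mem_filter] at hq
    rw [hQ]
    exact Finset.mem_filter.2 ⟨Finset.mem_univ _, hpos1 q hq.2.1 hq.2.2⟩
  by_cases hex : ∃ j : Fin m, n ≤ (j : ℕ) ∧ 0 < k ⟨(j : ℕ) + 1, by omega⟩
  · exfalso
    obtain ⟨j₀, hj₀n, hkj₀⟩ := hex
    have hj₀mn : (j₀ : ℕ) - n < m - n := by have := j₀.isLt; omega
    set t : ℝ := (β ⟨(j₀ : ℕ) - n, hj₀mn⟩ : ℝ) with htdef
    have hts : t + 1 ≤ S := hβS _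
    have hbMj₀ : b ⟨m + 1, by omega⟩ j₀ = -t := by
      rw [hbm j₀, dif_neg (by omega)]
    have hnotmem : (⟨(j₀ : ℕ) + 1, by omega⟩ : Fin (m + 2)) ∉
        (Finset.univ.filter fun q : Fin (m + 2) => 1 ≤ (q : ℕ) ∧ (q : ℕ) ≤ n) := by
      simp only [Finset.mem_filter, Finset.mem_univ, true_and]
      omega
    set s' := insert (⟨(j₀ : ℕ) + 1, by omega⟩ : Fin (m + 2))
      (Finset.univ.filter fun q : Fin (m + 2) => 1 ≤ (q : ℕ) ∧ (q : ℕ) ≤ n) with hs'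
    have hs'Q : s' ⊆ Q := by
      rw [hs']
      refine Finset.insert_subset ?_ h1nQ
      rw [hQ]; exact Finset.mem_filter.2 ⟨Finset.mem_univ _, hkj₀⟩
    have hs'card : n + 1 ≤ s'.card := by
      rw [hs', Finset.card_insert_of_notMem hnotmem, card_s1n]
    have hother : ∀ q, q ∉ s' → k q ≤ 0 := Hle s' hs'Q hs'card
    refine key n m hn hnm α β b hb0 hbe hbm a ha C hC k hk
      (-(S - t)) (1 + t - S) (-1) 0 (S - t) j₀ ⟨0, by omega⟩
      (fun h => by have h2 := congrArg Fin.val h; simp only [Fin.val_mk] at h2; omega)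
      (Or.inl (by intro h; rw [sub_eq_zero] at h; rw [← h] at hts; linarith))
      _ (fun q => rfl) ?_ ?_
    · intro q
      dsimp only
      split_ifs with h1 h2 h3 h4 h5 <;> try linarith
      · rw [hbMj₀, hSβ, ← hSdef]; linarith
    · intro q hkq'
      have hnotin : q ∉ s' → False := fun hq => by
        have := hother q hq
        omega
      dsimp only
      split_ifs with h1 h2 h3 h4 h5 <;> try linarith
      · exfalso
        apply hnotin
        intro hmem
        rw [hs', Finset.mem_insert] at hmem
        rcases hmem with hc | hc
        · have hv := congrArg Fin.val hc
          simp only [Fin.val_mk] at hv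
          omega
        · rw [Finset.mem_filter] at hc
          omega
      · exfalso
        apply hnotin
        intro hmem
        rw [hs', Finset.mem_insert] at hmem
        rcases hmem with hc | hc
        · have hv := congrArg Fin.val hc
          simp only [Fin.val_mk] at hv
          omega
        · rw [Finset.mem_filter] at hc
          omega
      · rw [hbMj₀, hSβ, ← hSdef]; linarith
  · push_neg at hex
    have hk0 : 0 < k 0 := by
      by_contra hk0
      push_neg at hk0
      refine key n m hn hnm α β b hb0 hbe hbm a ha C hC k hk
        (-S) (1 - S) 0 0 S ⟨0, by omega⟩ ⟨n, by omega⟩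
        (fun h => by have h2 := congrArg Fin.val h; simp only [Fin.val_mk] at h2; omega)
        (Or.inl (by intro h; rw [h] at hS1; linarith))
        _ (fun q => rfl) ?_ ?_
      · intro q
        dsimp only
        split_ifs <;> try linarith
        · rw [hSβ, ← hSdef]; linarith
      · intro q hkq'
        have HEX : ¬ ((q : ℕ) = 0) → (q : ℕ) ≤ m → n ≤ (q : ℕ) - 1 → False := by
          intro hna hnb hnc
          have hlt : (q : ℕ) - 1 < m := by omega
          have hthis := hex ⟨(q : ℕ) - 1, hlt⟩ (by show n ≤ (q : ℕ) - 1; omega)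
          have hqe : (⟨((q : ℕ) - 1) + 1, by omega⟩ : Fin (m + 2)) = q :=
            Fin.ext (show (q : ℕ) - 1 + 1 = (q : ℕ) by omega)
          rw [hqe] at hthis
          omega
        dsimp only
        split_ifs with h1 h2 h3 h4 h5 <;> try linarith
        · exfalso
          have hq0 : q = 0 := Fin.ext (by simpa using h1)
          rw [hq0] at hkq'; omega
        · exact absurd (HEX h1 h2 (by omega)) not_false
        · exact absurd (HEX h1 h2 (by omega)) not_false
        · rw [hSβ, ← hSdef]; linarith
    have h0notmem : (0 : Fin (m + 2)) ∉
        (Finset.univ.filter fun q : Fin (m + 2) => 1 ≤ (q : ℕ) ∧ (q : ℕ) ≤ n) := by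
      simp
    have hkL : k ⟨m + 1, by omega⟩ ≤ 0 := by
      refine Hle (insert 0 (Finset.univ.filter fun q : Fin (m + 2) => 1 ≤ (q : ℕ) ∧ (q : ℕ) ≤ n))
        (Finset.insert_subset (by rw [hQ]; exact Finset.mem_filter.2 ⟨Finset.mem_univ _, hk0⟩) h1nQ)
        (by rw [Finset.card_insert_of_notMem h0notmem, card_s1n]) _ ?_
      simp only [Finset.mem_insert, Finset.mem_filter, Finset.mem_univ, true_and]
      push_neg
      constructor
      · intro hc; have := congrArg Fin.val hc; simp at this
      · intro hc; omega
    rw [hQ]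
    ext q
    simp only [Finset.mem_filter, Finset.mem_univ, true_and]
    constructor
    · intro hkq'
      by_contra hqn
      push_neg at hqn
      rcases Nat.lt_or_ge m (q : ℕ) with hq2 | hq2
      · have hqe : q = ⟨m + 1, by omega⟩ := Fin.ext (show (q : ℕ) = m + 1 by have := q.isLt; omega)
        rw [hqe] at hkq'; omega
      · have hlt : (q : ℕ) - 1 < m := by omega
        have hthis := hex ⟨(q : ℕ) - 1, hlt⟩ (by show n ≤ (q : ℕ) - 1; omega)
        have hqe : (⟨((q : ℕ) - 1) + 1, by omega⟩ : Fin (m + 2)) = q :=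
          Fin.ext (show (q : ℕ) - 1 + 1 = (q : ℕ) by omega)
        rw [hqe] at hthis
        omega
    · intro hqn
      rcases Nat.eq_zero_or_pos (q : ℕ) with hq0 | hq0
      · have hqe : q = 0 := Fin.ext (by simpa using hq0)
        rw [hqe]; exact hk0
      · exact hpos1 q hq0 hqn
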